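/- Let Ω ⊂ ℝ² be a bounded open set and C₀ > 0. Then there exists a constant C = C(Ω, C₀) > 0 such that the following holds for every ℓ ∈ (0,1] and η ∈ (0,1]. Suppose (x_j)_{j∈J} is a finite family of points such that the open squares Q_j = x_j + (−ℓ/2, ℓ/2)² are pairwise disjoint, have closure contained in Ω, and the Lebesgue measure of Ω ∖ ⋃_{j∈J} Q_j is at most C₀·ℓ. Suppose further that for each j ∈ J a finite set of points a ∈ A_j ⊂ Q_j is given together with weights w_a ≥ 0 satisfying | ∑_{a ∈ A_j} w_a − ℓ² | ≤ η·ℓ². Then for every Lipschitz function φ : ℝ² → ℝ with Lipschitz constant at most 1 and with compact support contained in Ω, | ∑_{j∈J} ∑_{a∈A_j} w_a·φ(a) − ∫_Ω φ(x) dx | ≤ C·(η + ℓ). Equivalently, the dual Lipschitz norm of ∑_j ∑_{a∈A_j} w_a·δ_a − 𝓛|_Ω is at most C·(η + ℓ), where 𝓛 is Lebesgue measure and δ_a the Dirac mass at a. -/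

import Mathlib

open MeasureTheory Set

/-- The open square of side `ℓ` centered at `x ∈ ℝ²`. -/
def openSquare (ℓ : ℝ) (x : ℝ × ℝ) : Set (ℝ × ℝ) :=
  Set.Ioo (x.1 - ℓ / 2) (x.1 + ℓ / 2) ×ˢ Set.Ioo (x.2 - ℓ / 2) (x.2 + ℓ / 2)

/-- Let `Ω ⊂ ℝ²` be bounded open and `C₀ > 0`. Then there is
`C = C(Ω, C₀) > 0` such that for all `ℓ, η ∈ (0,1]`, any finite family of pairwise
disjoint open squares of side `ℓ` with closures in `Ω` covering `Ω` up to measure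
`C₀·ℓ`, and any finite sets of points with nonnegative weights in each square
whose total weight per square is `ℓ²` up to `η·ℓ²`, the weighted sum of any
compactly supported 1-Lipschitz `φ` at the points differs from `∫_Ω φ` by at most
`C·(η + ℓ)`. -/
theorem vortex_gluing_estimate (Ω : Set (ℝ × ℝ)) (hΩo : IsOpen Ω)
    (hΩb : Bornology.IsBounded Ω) (C₀ : ℝ) (hC₀ : 0 < C₀) :
    ∃ C > (0 : ℝ), ∀ ℓ ∈ Set.Ioc (0 : ℝ) 1, ∀ η ∈ Set.Ioc (0 : ℝ) 1,
      ∀ X : Finset (ℝ × ℝ),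
      (∀ x ∈ X, closure (openSquare ℓ x) ⊆ Ω) →
      ((X : Set (ℝ × ℝ)).Pairwise fun x y => Disjoint (openSquare ℓ x) (openSquare ℓ y)) →
      volume (Ω \ ⋃ x ∈ X, openSquare ℓ x) ≤ ENNReal.ofReal (C₀ * ℓ) →
      ∀ A : (ℝ × ℝ) → Finset (ℝ × ℝ), ∀ w : (ℝ × ℝ) → (ℝ × ℝ) → ℝ,
      (∀ j ∈ X, (∀ a ∈ A j, a ∈ openSquare ℓ j ∧ 0 ≤ w j a) ∧
        |(∑ a ∈ A j, w j a) - ℓ ^ 2| ≤ η * ℓ ^ 2) →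
      ∀ φ : ℝ × ℝ → ℝ, LipschitzWith 1 φ → HasCompactSupport φ → tsupport φ ⊆ Ω →
      |(∑ j ∈ X, ∑ a ∈ A j, w j a * φ a) - ∫ x in Ω, φ x| ≤ C * (η + ℓ) := by
  obtain ⟨R, hR0, hΩR⟩ : ∃ R, 0 < R ∧ Ω ⊆ Metric.closedBall 0 R :=
    let ⟨r, hr, hsub⟩ := hΩb.subset_closedBall_lt 0 0
    ⟨r, hr, hsub⟩
  set M : ℝ := 3 * R + 1 with hMdef
  have hM : 0 < M := by positivity
  have hM1 : 1 ≤ M := by simp only [hMdef]; linarith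
  have hΩfin : volume Ω < ⊤ := hΩb.measure_lt_top
  set V : ℝ := (volume Ω).toReal with hVdef
  have hV : 0 ≤ V := ENNReal.toReal_nonneg
  refine ⟨(3 + M) * V + M * C₀ + 1, by positivity, ?_⟩
  rintro ℓ ⟨hℓ0, hℓ1⟩ η ⟨hη0, hη1⟩ X hcl hdisj hcov A w hAw φ hφ hφc hφs
  have hmeas : ∀ x : ℝ × ℝ, MeasurableSet (openSquare ℓ x) := fun x =>
    measurableSet_Ioo.prod measurableSet_Ioo
  have hvol : ∀ x : ℝ × ℝ, volume (openSquare ℓ x) = ENNReal.ofReal (ℓ ^ 2) := by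
    intro x
    rw [openSquare, Measure.volume_eq_prod, Measure.prod_prod, Real.volume_Ioo, Real.volume_Ioo,
      show x.1 + ℓ / 2 - (x.1 - ℓ / 2) = ℓ by ring, show x.2 + ℓ / 2 - (x.2 - ℓ / 2) = ℓ by ring,
      sq, ENNReal.ofReal_mul hℓ0.le]
  have hvolfin : ∀ x : ℝ × ℝ, volume (openSquare ℓ x) < ⊤ := fun x => by
    rw [hvol]; exact ENNReal.ofReal_lt_top
  -- uniform bound for φ
  have hφM : ∀ x, |φ x| ≤ M := by
    intro x
    by_cases hx : φ x = 0
    · rw [hx, abs_zero]; exact hM.le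
    · have hxΩ : x ∈ Ω := hφs (subset_tsupport φ hx)
      have hxR : ‖x‖ ≤ R := by
        have := hΩR hxΩ
        rwa [Metric.mem_closedBall, dist_zero_right] at this
      set y : ℝ × ℝ := (2 * R + 1, 0) with hy
      have hyn : ‖y‖ = 2 * R + 1 := by
        have h21 : (0:ℝ) ≤ 2 * R + 1 := by linarith
        rw [hy, Prod.norm_def]
        simp [Real.norm_eq_abs, abs_of_nonneg h21, max_eq_left h21]
      have hyz : φ y = 0 := by
        apply image_eq_zero_of_notMem_tsupport
        intro hyt
        have := hΩR (hφs hyt)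
        rw [Metric.mem_closedBall, dist_zero_right, hyn] at this
        linarith
      have hlip := hφ.dist_le_mul x y
      simp only [NNReal.coe_one, one_mul] at hlip
      rw [Real.dist_eq, hyz, sub_zero] at hlip
      calc |φ x| ≤ dist x y := hlip
        _ ≤ dist x 0 + dist 0 y := dist_triangle x 0 y
        _ = ‖x‖ + ‖y‖ := by rw [dist_zero_right, dist_comm, dist_zero_right]
        _ ≤ M := by rw [hyn, hMdef]; linarith
  have hφint : Integrable φ := hφ.continuous.integrable_of_hasCompactSupport hφc
  -- distance within a square
  have hdist : ∀ (c x : ℝ × ℝ), x ∈ openSquare ℓ c → |φ x - φ c| ≤ ℓ := by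
    intro c x hx
    obtain ⟨⟨h1, h2⟩, h3, h4⟩ := hx
    have hlip := hφ.dist_le_mul x c
    simp only [NNReal.coe_one, one_mul] at hlip
    rw [Real.dist_eq] at hlip
    refine hlip.trans ?_
    rw [Prod.dist_eq]
    apply max_le <;> rw [Real.dist_eq, abs_le] <;> constructor <;> linarith
  set U : Set (ℝ × ℝ) := ⋃ x ∈ X, openSquare ℓ x with hUdef
  have hUmeas : MeasurableSet U := MeasurableSet.biUnion X.countable_toSet fun i _ => hmeas i
  have hUsub : U ⊆ Ω := by
    refine Set.iUnion₂_subset fun i hi => ?_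
    exact (subset_closure.trans (hcl i hi))
  -- split the integral
  have hsplit : ∫ x in Ω, φ x = (∑ j ∈ X, ∫ x in openSquare ℓ j, φ x) + ∫ x in Ω \ U, φ x := by
    conv_lhs => rw [show Ω = U ∪ (Ω \ U) from (Set.union_diff_cancel hUsub).symm]
    rw [setIntegral_union disjoint_sdiff_self_right (hΩo.measurableSet.diff hUmeas)
      hφint.integrableOn hφint.integrableOn,
      integral_biUnion_finset X (fun i _ => hmeas i) hdisj (fun i _ => hφint.integrableOn)]
  -- per-square estimate
  have key : ∀ j ∈ X, |(∑ a ∈ A j, w j a * φ a) - ∫ x in openSquare ℓ j, φ x| ≤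
      3 * ℓ ^ 3 + M * η * ℓ ^ 2 := by
    intro j hj
    obtain ⟨hja, hjs⟩ := hAw j hj
    have hw : ∀ a ∈ A j, 0 ≤ w j a := fun a ha => (hja a ha).2
    have hsumle : (∑ a ∈ A j, w j a) ≤ 2 * ℓ ^ 2 := by
      have := (abs_le.mp hjs).2
      nlinarith [sq_nonneg ℓ]
    have hjΩ : |φ j| ≤ M := hφM j
    -- term 3
    have hconst : ∫ _ in openSquare ℓ j, φ j = ℓ ^ 2 * φ j := by
      rw [setIntegral_const, measureReal_def, hvol, ENNReal.toReal_ofReal (sq_nonneg ℓ), smul_eq_mul]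
    have h3 : |(∫ x in openSquare ℓ j, φ x) - ℓ ^ 2 * φ j| ≤ ℓ ^ 3 := by
      have hsub : (∫ x in openSquare ℓ j, (φ x - φ j)) =
          (∫ x in openSquare ℓ j, φ x) - ℓ ^ 2 * φ j := by
        rw [integral_sub hφint.integrableOn
          (integrableOn_const (hvolfin j).ne), hconst]
      rw [← hsub]
      have hb := norm_setIntegral_le_of_norm_le_const (μ := volume)
        (f := fun x => φ x - φ j) (C := ℓ) (hvolfin j)
        (fun x hx => by rw [Real.norm_eq_abs]; exact hdist j x hx)
      rw [Real.norm_eq_abs, measureReal_def, hvol, ENNReal.toReal_ofReal (sq_nonneg ℓ)] at hb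
      calc |∫ x in openSquare ℓ j, (φ x - φ j)| ≤ ℓ * ℓ ^ 2 := hb
        _ = ℓ ^ 3 := by ring
    -- term 1
    have h1 : |∑ a ∈ A j, w j a * (φ a - φ j)| ≤ 2 * ℓ ^ 3 := by
      calc |∑ a ∈ A j, w j a * (φ a - φ j)| ≤ ∑ a ∈ A j, |w j a * (φ a - φ j)| :=
            Finset.abs_sum_le_sum_abs _ _
        _ ≤ ∑ a ∈ A j, w j a * ℓ := Finset.sum_le_sum fun a ha => by
            rw [abs_mul, abs_of_nonneg (hw a ha)]
            exact mul_le_mul_of_nonneg_left (hdist j a (hja a ha).1) (hw a ha)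
        _ = (∑ a ∈ A j, w j a) * ℓ := by rw [Finset.sum_mul]
        _ ≤ 2 * ℓ ^ 2 * ℓ := mul_le_mul_of_nonneg_right hsumle hℓ0.le
        _ = 2 * ℓ ^ 3 := by ring
    -- term 2
    have h2 : |((∑ a ∈ A j, w j a) - ℓ ^ 2) * φ j| ≤ M * η * ℓ ^ 2 := by
      rw [abs_mul]
      calc |(∑ a ∈ A j, w j a) - ℓ ^ 2| * |φ j| ≤ (η * ℓ ^ 2) * M := by
            apply mul_le_mul hjs hjΩ (abs_nonneg _) (by positivity)
        _ = M * η * ℓ ^ 2 := by ring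
    have heq : (∑ a ∈ A j, w j a * φ a) - ∫ x in openSquare ℓ j, φ x =
        (∑ a ∈ A j, w j a * (φ a - φ j)) + ((∑ a ∈ A j, w j a) - ℓ ^ 2) * φ j
          - ((∫ x in openSquare ℓ j, φ x) - ℓ ^ 2 * φ j) := by
      have : ∑ a ∈ A j, w j a * φ a =
          (∑ a ∈ A j, w j a * (φ a - φ j)) + (∑ a ∈ A j, w j a) * φ j := by
        rw [Finset.sum_mul, ← Finset.sum_add_distrib]
        congr 1; ext a; ring
      rw [this]; ring
    rw [heq]
    calc |_| ≤ |(∑ a ∈ A j, w j a * (φ a - φ j)) + ((∑ a ∈ A j, w j a) - ℓ ^ 2) * φ j|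
          + |(∫ x in openSquare ℓ j, φ x) - ℓ ^ 2 * φ j| := abs_sub _ _
      _ ≤ (|∑ a ∈ A j, w j a * (φ a - φ j)| + |((∑ a ∈ A j, w j a) - ℓ ^ 2) * φ j|)
          + |(∫ x in openSquare ℓ j, φ x) - ℓ ^ 2 * φ j| := by
            gcongr; exact abs_add_le _ _
      _ ≤ (2 * ℓ ^ 3 + M * η * ℓ ^ 2) + ℓ ^ 3 := by gcongr
      _ = 3 * ℓ ^ 3 + M * η * ℓ ^ 2 := by ring
  -- cardinality bound
  have hcard : (X.card : ℝ) * ℓ ^ 2 ≤ V := by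
    have h1 : volume U = (X.card : ENNReal) * ENNReal.ofReal (ℓ ^ 2) := by
      rw [hUdef, measure_biUnion_finset hdisj (fun i _ => hmeas i)]
      simp [hvol, Finset.sum_const, nsmul_eq_mul]
    have h2 : volume U ≤ volume Ω := measure_mono hUsub
    rw [h1] at h2
    have h3 := ENNReal.toReal_mono hΩfin.ne h2
    rwa [ENNReal.toReal_mul, ENNReal.toReal_natCast,
      ENNReal.toReal_ofReal (sq_nonneg ℓ)] at h3
  -- remainder bound
  have hrem : |∫ x in Ω \ U, φ x| ≤ M * (C₀ * ℓ) := by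
    have hfin : volume (Ω \ U) < ⊤ := lt_of_le_of_lt hcov ENNReal.ofReal_lt_top
    have h1 := norm_setIntegral_le_of_norm_le_const (μ := volume) (f := φ) (C := M)
      hfin (fun x _ => by rw [Real.norm_eq_abs]; exact hφM x)
    rw [Real.norm_eq_abs] at h1
    have h2 : (volume (Ω \ U)).toReal ≤ C₀ * ℓ := by
      have := ENNReal.toReal_mono ENNReal.ofReal_ne_top hcov
      rwa [ENNReal.toReal_ofReal (by positivity)] at this
    calc |∫ x in Ω \ U, φ x| ≤ M * (volume (Ω \ U)).toReal := h1
      _ ≤ M * (C₀ * ℓ) := mul_le_mul_of_nonneg_left h2 hM.le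
  -- assemble
  rw [hsplit]
  have heq2 : (∑ j ∈ X, ∑ a ∈ A j, w j a * φ a) -
      ((∑ j ∈ X, ∫ x in openSquare ℓ j, φ x) + ∫ x in Ω \ U, φ x) =
      (∑ j ∈ X, ((∑ a ∈ A j, w j a * φ a) - ∫ x in openSquare ℓ j, φ x))
        - ∫ x in Ω \ U, φ x := by
    rw [Finset.sum_sub_distrib]; ring
  rw [heq2]
  have hsum : |∑ j ∈ X, ((∑ a ∈ A j, w j a * φ a) - ∫ x in openSquare ℓ j, φ x)| ≤
      (X.card : ℝ) * (3 * ℓ ^ 3 + M * η * ℓ ^ 2) := by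
    calc |∑ j ∈ X, ((∑ a ∈ A j, w j a * φ a) - ∫ x in openSquare ℓ j, φ x)|
        ≤ ∑ j ∈ X, |(∑ a ∈ A j, w j a * φ a) - ∫ x in openSquare ℓ j, φ x| :=
          Finset.abs_sum_le_sum_abs _ _
      _ ≤ ∑ _j ∈ X, (3 * ℓ ^ 3 + M * η * ℓ ^ 2) := Finset.sum_le_sum key
      _ = (X.card : ℝ) * (3 * ℓ ^ 3 + M * η * ℓ ^ 2) := by
          rw [Finset.sum_const, nsmul_eq_mul]
  have hXV : (X.card : ℝ) * (3 * ℓ ^ 3 + M * η * ℓ ^ 2) ≤ (3 * ℓ + M * η) * V := by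
    have h : (X.card : ℝ) * (3 * ℓ ^ 3 + M * η * ℓ ^ 2) =
        (3 * ℓ + M * η) * ((X.card : ℝ) * ℓ ^ 2) := by ring
    rw [h]
    exact mul_le_mul_of_nonneg_left hcard (by positivity)
  calc |(∑ j ∈ X, ((∑ a ∈ A j, w j a * φ a) - ∫ x in openSquare ℓ j, φ x))
        - ∫ x in Ω \ U, φ x|
      ≤ |∑ j ∈ X, ((∑ a ∈ A j, w j a * φ a) - ∫ x in openSquare ℓ j, φ x)|
        + |∫ x in Ω \ U, φ x| := abs_sub _ _
    _ ≤ (3 * ℓ + M * η) * V + M * (C₀ * ℓ) := add_le_add (hsum.trans hXV) hrem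
    _ ≤ ((3 + M) * V + M * C₀ + 1) * (η + ℓ) := by
        nlinarith [mul_nonneg hV hη0.le, mul_nonneg hV hℓ0.le,
          mul_nonneg (mul_nonneg hM.le hV) hη0.le,
          mul_nonneg (mul_nonneg hM.le hC₀.le) hη0.le,
          mul_nonneg (mul_nonneg hM.le hV) hℓ0.le,
          mul_nonneg (mul_nonneg (sub_nonneg.2 hℓ1) hV) hℓ0.le]
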